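/- arXiv:0711.1181 — 3 statements merged into one kernel-verified Lean document; each statement's English description precedes it below -/
import Mathlib

section
/- Let 𝒜 be a Grothendieck category with a fixed generator X. If I is a set and f : X^(I) → Y is an epimorphism, then there is a subset J ⊆ I with |J| ≤ |Y| such that the restricted morphism X^(J) → Y (the composite of the coproduct inclusion with f) is still an epimorphism. -/
open CategoryTheory Limits

universe v u

namespace Statement0Aux

variable {C : Type u} [Category.{v} C] [Abelian C] [HasColimits C]
  {I : Type v} {X Y : C} (f : (∐ fun _ : I => X) ⟶ Y)

/-- The restriction of `f` to the subcoproduct indexed by `J`. -/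
noncomputable def F (J : Set I) : (∐ fun _ : J => X) ⟶ Y :=
  (Sigma.desc fun j : J => Sigma.ι (fun _ : I => X) (j : I)) ≫ f

/-- The cokernel projection of the restriction. -/
noncomputable def pi (J : Set I) : Y ⟶ cokernel (F f J) := cokernel.π (F f J)

lemma comp_pi_eq_zero_of_mem {J : Set I} {i : I} (hi : i ∈ J) :
    (Sigma.ι (fun _ : I => X) i ≫ f) ≫ pi f J = 0 := by
  have h : Sigma.ι (fun _ : I => X) i ≫ f
      = Sigma.ι (fun _ : J => X) (⟨i, hi⟩ : J) ≫ F f J := by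
    simp [F]
  rw [h, Category.assoc, pi, cokernel.condition, comp_zero]

lemma comp_pi_mono {J J' : Set I} (h : J ⊆ J') (g : X ⟶ Y) (hg : g ≫ pi f J = 0) :
    g ≫ pi f J' = 0 := by
  have hF : F f J ≫ pi f J' = 0 := by
    apply Sigma.hom_ext
    intro j
    have := comp_pi_eq_zero_of_mem f (h j.2)
    rw [comp_zero]
    calc Sigma.ι (fun _ : J => X) j ≫ F f J ≫ pi f J'
        = (Sigma.ι (fun _ : I => X) (j : I) ≫ f) ≫ pi f J' := by
          rw [← Category.assoc]; congr 1; simp [F]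
      _ = 0 := comp_pi_eq_zero_of_mem f (h j.2)
  have hd : pi f J' = pi f J ≫ cokernel.desc (F f J) (pi f J') hF :=
    (cokernel.π_desc _ _ _).symm
  rw [hd, ← Category.assoc, hg, zero_comp]

/-- The recursively defined "independence" predicate. -/
def P : I → Prop :=
  (WellOrderingRel.isWellOrder (α := I)).toIsWellFounded.wf.fix
    (fun i IH =>
      ¬ ((Sigma.ι (fun _ : I => X) i ≫ f) ≫
          pi f {j | ∃ h : WellOrderingRel j i, IH j h} = 0))

lemma P_iff (i : I) :
    P f i ↔ ¬ ((Sigma.ι (fun _ : I => X) i ≫ f) ≫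
      pi f {j | WellOrderingRel j i ∧ P f j} = 0) := by
  have h := WellFounded.fix_eq
    (WellOrderingRel.isWellOrder (α := I)).toIsWellFounded.wf
    (fun i (IH : ∀ j, WellOrderingRel j i → Prop) =>
      ¬ ((Sigma.ι (fun _ : I => X) i ≫ f) ≫
          pi f {j | ∃ h : WellOrderingRel j i, IH j h} = 0)) i
  have hset : {j | ∃ _h : WellOrderingRel j i, P f j}
      = {j | WellOrderingRel j i ∧ P f j} := by
    ext j; exact exists_prop
  rw [show P f i = _ from h]
  show ¬ ((Sigma.ι (fun _ : I => X) i ≫ f) ≫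
      pi f {j | ∃ _h : WellOrderingRel j i, P f j} = 0) ↔ _
  rw [hset]

end Statement0Aux

/-- If `𝒜` is a Grothendieck category with generator `X` and `X^{(I)} → Y` is an
epimorphism, then there is a subset `J ⊆ I` with `|J| ≤ |Y| = #Hom(X,Y)` such that the
restriction `X^{(J)} → Y` is still an epimorphism. -/
theorem statement0 {C : Type u} [Category.{v} C] [Abelian C] [HasColimits C] [AB5 C]
    (X : C) (hX : IsSeparator X) {I : Type v} (Y : C)
    (f : (∐ fun _ : I => X) ⟶ Y) (hf : Epi f) :
    ∃ J : Set I, Cardinal.mk J ≤ Cardinal.mk (X ⟶ Y) ∧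
      Epi ((Sigma.desc fun j : J => Sigma.ι (fun _ : I => X) (j : I)) ≫ f) := by
  classical
  open Statement0Aux in
  refine ⟨{i | P f i}, ?_, ?_⟩
  · -- cardinality bound: `i ↦ ι_i ≫ f` is injective on `J`
    apply Cardinal.mk_le_of_injective
      (f := fun j : {i | P f i} => Sigma.ι (fun _ : I => X) (j : I) ≫ f)
    rintro ⟨i, hi⟩ ⟨i', hi'⟩ hgeq0
    have hgeq : Sigma.ι (fun _ : I => X) i ≫ f = Sigma.ι (fun _ : I => X) i' ≫ f := hgeq0
    simp only [Subtype.mk.injEq]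
    by_contra hne
    rcases trichotomous_of (WellOrderingRel) i i' with h | h | h
    · -- i ≺ i' : then ι_i ≫ f kills pi of {j ≺ i', P j}, but ι_i' ≫ f doesn't
      have h1 : (Sigma.ι (fun _ : I => X) i ≫ f) ≫
          pi f {j | WellOrderingRel j i' ∧ P f j} = 0 :=
        comp_pi_eq_zero_of_mem f ⟨h, hi⟩
      have h2 := (P_iff f i').1 hi'
      rw [← hgeq] at h2
      exact h2 h1
    · exact hne h
    · have h1 : (Sigma.ι (fun _ : I => X) i' ≫ f) ≫
          pi f {j | WellOrderingRel j i ∧ P f j} = 0 :=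
        comp_pi_eq_zero_of_mem f ⟨h, hi'⟩
      have h2 := (P_iff f i).1 hi
      rw [hgeq] at h2
      exact h2 h1
  · -- epimorphy
    show Epi (F f {i | P f i})
    apply Abelian.epi_of_cokernel_π_eq_zero
    have hall : ∀ i : I, (Sigma.ι (fun _ : I => X) i ≫ f) ≫ pi f {i | P f i} = 0 := by
      intro i
      by_cases hi : P f i
      · exact comp_pi_eq_zero_of_mem f hi
      · have h0 : (Sigma.ι (fun _ : I => X) i ≫ f) ≫
            pi f {j | WellOrderingRel j i ∧ P f j} = 0 := by
          by_contra hc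
          exact hi ((P_iff f i).2 hc)
        exact comp_pi_mono f (fun j hj => hj.2) _ h0
    have hfpi : f ≫ pi f {i | P f i} = 0 := by
      apply Sigma.hom_ext
      intro i
      rw [← Category.assoc, hall i, comp_zero]
    refine (cancel_epi f).1 ?_
    rw [comp_zero]
    exact hfpi
end

section
/- Let 𝒜 be a Grothendieck category with a fixed generator X. For every object Y of 𝒜 there is a cardinal κ such that for every epimorphism U → Y in 𝒜 there is a subobject U′ ⊆ U with |U′| ≤ κ and such that the composite U′ → U → Y is an epimorphism. -/
/-!
For every proper subobject `A` of `Y`, some `f : X ⟶ U` has `f ≫ g` not factoring through `A`,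
since otherwise the separator `X` would force `g ≫ cokernel.π A.arrow = 0`. Gluing one such `f`
per subobject of `Y` gives `h : ∐ X ⟶ U` with `h ≫ g` epi, because its image is contained in no
proper subobject. The image of `h` is a quotient of the fixed object `∐ X`, i.e. the cokernel of
one of its (set-many) subobjects, so `|image h|` is bounded independently of `U`.
-/

open CategoryTheory Limits

universe v u

section

variable {C : Type u} [Category.{v} C] [Abelian C]

namespace CategoryTheory.Subobject

theorem eq_top_of_factors_comp_epi {X P Y : C} (hX : IsSeparator X) (p : P ⟶ Y) [Epi p]
    (A : Subobject Y) (hA : ∀ f : X ⟶ P, A.Factors (f ≫ p)) : A = ⊤ := by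
  have hpπ : p ≫ cokernel.π A.arrow = 0 := hX.def _ _ fun f => by
    rw [comp_zero, ← Category.assoc, ← factorThru_arrow _ _ (hA f), Category.assoc,
      cokernel.condition, comp_zero]
  have : Epi A.arrow :=
    Preadditive.epi_of_cokernel_zero ((cancel_epi p).1 (hpπ.trans (comp_zero).symm))
  have : IsIso A.arrow := isIso_of_mono_of_epi _
  exact eq_top_of_isIso_arrow A

end CategoryTheory.Subobject

theorem CategoryTheory.IsSeparator.exists_epi_comp_of_epi [HasColimits C] [WellPowered.{v} C]
    {X P Y : C} (hX : IsSeparator X) (p : P ⟶ Y) [Epi p] :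
    ∃ h : (∐ fun _ : Shrink.{v} (Subobject Y) => X) ⟶ P, Epi (h ≫ p) := by
  have hwitness : ∀ A : Subobject Y, ∃ f : X ⟶ P, A.Factors (f ≫ p) → A = ⊤ := fun A => by
    by_contra! hA
    exact (hA 0).2 (A.eq_top_of_factors_comp_epi hX p fun f => (hA f).1)
  choose c hc using hwitness
  let e := equivShrink.{v} (Subobject Y)
  refine ⟨Limits.Sigma.desc fun A => c (e.symm A), ?_⟩
  set q := Limits.Sigma.desc (fun A => c (e.symm A)) ≫ p
  have hq : imageSubobject q = ⊤ := hc _ <| by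
    have : c (imageSubobject q) ≫ p = Limits.Sigma.ι _ (e (imageSubobject q)) ≫ q := by
      simp [q]
    exact this ▸ imageSubobject_factors_comp_self q _
  have : IsIso (imageSubobject q).arrow := (Subobject.isIso_arrow_iff_eq_top _).2 hq
  rw [← imageSubobject_arrow_comp q]
  exact epi_comp _ _

noncomputable def CategoryTheory.Limits.imageSubobjectIsoCokernel {T U : C} (h : T ⟶ U) :
    (imageSubobject h : C) ≅ cokernel (kernelSubobject h).arrow :=
  imageSubobjectIso h ≪≫ (Abelian.coimageIsoImage' h).symm ≪≫
    (cokernelEpiComp (kernelSubobjectIso h).hom (kernel.ι h)).symm ≪≫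
    cokernelIsoOfEq (kernelSubobject_arrow h)

theorem CategoryTheory.Limits.mk_hom_imageSubobject_le [WellPowered.{v} C] (X : C) {T U : C}
    (h : T ⟶ U) :
    Cardinal.mk (X ⟶ (imageSubobject h : C)) ≤
      ⨆ S : Subobject T, Cardinal.mk (X ⟶ cokernel S.arrow) := by
  rw [Cardinal.mk_congr ((Iso.refl X).homCongr (imageSubobjectIsoCokernel h))]
  exact le_ciSup Cardinal.bddAbove_of_small (kernelSubobject h)

end

theorem statement1_general {C : Type u} [Category.{v} C] [Abelian C] [HasColimits C]
    (X : C) (hX : IsSeparator X) (Y : C) :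
    ∃ κ : Cardinal.{v}, ∀ (U : C) (g : U ⟶ Y), Epi g →
      ∃ U' : Subobject U, Cardinal.mk (X ⟶ (U' : C)) ≤ κ ∧ Epi (U'.arrow ≫ g) := by
  have : WellPowered.{v} C := wellPowered_of_isDetector X hX.isDetector
  let T : C := ∐ fun _ : Shrink.{v} (Subobject Y) => X
  refine ⟨⨆ S : Subobject T, Cardinal.mk (X ⟶ cokernel S.arrow), fun U g hg => ?_⟩
  obtain ⟨h, hhg⟩ := hX.exists_epi_comp_of_epi g
  refine ⟨imageSubobject h, mk_hom_imageSubobject_le X h, ?_⟩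
  rw [← imageSubobject_arrow_comp h, Category.assoc] at hhg
  exact epi_of_epi (factorThruImageSubobject h) _

/-- In a Grothendieck category with generator `X`, for every object `Y` there is a
cardinal `κ` such that every epimorphism `U → Y` admits a subobject `U' ⊆ U` with
`|U'| ≤ κ` whose composite `U' → U → Y` is still an epimorphism. -/
theorem statement1 {C : Type u} [Category.{v} C] [Abelian C] [HasColimits C] [AB5 C]
    (X : C) (hX : IsSeparator X) (Y : C) :
    ∃ κ : Cardinal.{v}, ∀ (U : C) (g : U ⟶ Y), Epi g →
      ∃ U' : Subobject U, Cardinal.mk (X ⟶ (U' : C)) ≤ κ ∧ Epi (U'.arrow ≫ g) :=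
  statement1_general X hX Y
end

section
/- Let 𝒜 be a Grothendieck category with a fixed generator X. Given a cardinal κ there exists a cardinal λ such that for every object Y with |Y| ≤ κ and every subobject Z ⊆ Y, the quotient satisfies |Y/Z| ≤ λ. -/
/-!
Let `A` be the coproduct of `κ` copies of the separator `X`. Every `Y` with `|Y| ≤ κ` is a
quotient of `A`, hence so is every `Y/Z`. Since a category with a separator is well-powered,
the quotients of `A` form, up to isomorphism, a set, and `λ` is the supremum of their sizes.
-/

open CategoryTheory Limits

universe v u

namespace CategoryTheory

variable {C : Type u} [Category.{v} C]

theorem epi_sigmaDesc_of_surjective {X Y : C} (hX : IsSeparator X) {ι : Type*}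
    [HasCoproduct fun _ : ι => X] {g : ι → (X ⟶ Y)} (hg : Function.Surjective g) :
    Epi (Limits.Sigma.desc g) := by
  refine ⟨fun u v huv => (isSeparator_def X).mp hX u v fun h => ?_⟩
  obtain ⟨i, rfl⟩ := hg h
  rw [← Limits.Sigma.ι_desc g i, Category.assoc, Category.assoc, huv]

theorem exists_subobject_cokernel_iso_of_epi [Abelian C] {A Q : C} (p : A ⟶ Q) [Epi p] :
    ∃ S : Subobject A, Nonempty (cokernel S.arrow ≅ Q) :=
  ⟨Subobject.mk (kernel.ι p),
    ⟨cokernelIsoOfEq (Subobject.underlyingIso_hom_comp_eq_mk _).symm ≪≫ cokernelEpiComp _ _ ≪≫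
      (colimit.isColimit _).coconePointUniqueUpToIso
        (Abelian.epiIsCokernelOfKernel _ (kernelIsKernel p))⟩⟩

theorem exists_mk_hom_le_of_epi [Abelian C] [WellPowered.{v} C] (X A : C) :
    ∃ lam : Cardinal.{v}, ∀ {Q : C} (p : A ⟶ Q) [Epi p], Cardinal.mk (X ⟶ Q) ≤ lam := by
  obtain ⟨lam, hlam⟩ := Cardinal.bddAbove_of_small (s :=
    Set.range fun S : Subobject A => Cardinal.mk (X ⟶ cokernel S.arrow))
  refine ⟨lam, fun p _ => ?_⟩
  obtain ⟨S, ⟨i⟩⟩ := exists_subobject_cokernel_iso_of_epi p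
  exact (Cardinal.mk_congr ((Iso.refl X).homCongr i)).symm.le.trans (hlam ⟨S, rfl⟩)

end CategoryTheory

theorem statement2_general {C : Type u} [Category.{v} C] [Abelian C] [HasColimits C]
    (X : C) (hX : IsSeparator X) (κ : Cardinal.{v}) :
    ∃ lam : Cardinal.{v}, ∀ Y : C, Cardinal.mk (X ⟶ Y) ≤ κ →
      ∀ Z : Subobject Y, Cardinal.mk (X ⟶ cokernel Z.arrow) ≤ lam := by
  have := wellPowered_of_isSeparator X hX
  obtain ⟨lam, hlam⟩ := exists_mk_hom_le_of_epi X (∐ fun _ : κ.out => X)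
  refine ⟨lam, fun Y hY Z => ?_⟩
  obtain ⟨f⟩ : Nonempty ((X ⟶ Y) ↪ κ.out) := by rwa [← Cardinal.le_def, Cardinal.mk_out]
  have : Nonempty (X ⟶ Y) := ⟨0⟩
  have := epi_sigmaDesc_of_surjective hX (Function.invFun_surjective f.injective)
  exact hlam (Sigma.desc (Function.invFun f) ≫ cokernel.π Z.arrow)

/-- In a Grothendieck category with generator `X`, given a cardinal `κ` there is a
cardinal `λ` such that whenever `|Y| ≤ κ` and `Z ⊆ Y`, the quotient `Y/Z` satisfies
`|Y/Z| ≤ λ`. -/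
theorem statement2 {C : Type u} [Category.{v} C] [Abelian C] [HasColimits C] [AB5 C]
    (X : C) (hX : IsSeparator X) (κ : Cardinal.{v}) :
    ∃ lam : Cardinal.{v}, ∀ Y : C, Cardinal.mk (X ⟶ Y) ≤ κ →
      ∀ Z : Subobject Y, Cardinal.mk (X ⟶ cokernel Z.arrow) ≤ lam :=
  statement2_general X hX κ
end
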